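/- arXiv:1412.1641 — 2 statements merged into one kernel-verified Lean document; each statement's English description precedes it below -/
import Mathlib

section
/- For every n ≥ 2, there exist an alphabet Σ and a language L over Σ such that: L is n-piecewise testable; L is not (n−1)-piecewise testable; L is recognized by an NFA of depth n−1; and the minimal DFA recognizing L has depth 2^n − 1. -/
/-- `subk k w` is the set of scattered subwords of `w` of length at most `k`. -/
def subk {α : Type*} (k : ℕ) (w : List α) : Set (List α) :=
  {u | u.length ≤ k ∧ u.Sublist w}

/-- Two words are `k`-equivalent if they have the same subwords of length at most `k`. -/
def kEquiv {α : Type*} (k : ℕ) (u v : List α) : Prop :=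
  subk k u = subk k v

/-- A language is `k`-piecewise testable (Simon's characterization):
`k`-equivalent words are equi-members. -/
def IsPT {α : Type*} (k : ℕ) (L : Language α) : Prop :=
  ∀ u v : List α, kEquiv k u v → (u ∈ L ↔ v ∈ L)

/-- A DFA is minimal if all states are reachable and pairwise distinguishable. -/
def IsMinimalDFA {α σ : Type*} (A : DFA α σ) : Prop :=
  (∀ q : σ, ∃ w : List α, A.eval w = q) ∧
  ∀ p q : σ,
    (∀ w : List α, (A.evalFrom p w ∈ A.accept ↔ A.evalFrom q w ∈ A.accept)) → p = q

/-- There is a simple path (pairwise distinct states) with `m` transitions in the DFA `A`. -/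
def DFAHasSimplePath {α σ : Type*} (A : DFA α σ) (m : ℕ) : Prop :=
  ∃ (qs : Fin (m + 1) → σ) (as : Fin m → α),
    Function.Injective qs ∧ ∀ i : Fin m, A.step (qs i.castSucc) (as i) = qs i.succ

/-- The depth of a DFA: the number of transitions on a longest simple path. -/
noncomputable def dfaDepth {α σ : Type*} (A : DFA α σ) : ℕ :=
  sSup {m | DFAHasSimplePath A m}

/-- There is a simple path (pairwise distinct states) with `m` transitions in the NFA `A`. -/
def NFAHasSimplePath {α σ : Type*} (A : NFA α σ) (m : ℕ) : Prop :=
  ∃ (qs : Fin (m + 1) → σ) (as : Fin m → α),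
    Function.Injective qs ∧ ∀ i : Fin m, qs i.succ ∈ A.step (qs i.castSucc) (as i)

/-- The depth of an NFA: the number of transitions on a longest simple path. -/
noncomputable def nfaDepth {α σ : Type*} (A : NFA α σ) : ℕ :=
  sSup {m | NFAHasSimplePath A m}


/-!
The witness language lives over the alphabet `{0, …, n-1}`. It is accepted by the NFA in which
state `q` loops on every letter except `q`, and on `q` jumps to any smaller state; all states
are initial and `0` is final. Its subset automaton is a binary counter: a set of states is the
set of `1`-bits of a number, and reading the least element of the set decrements that number.
Hence the countdown from `2 ^ n - 1` is a simple path through all `2 ^ n` subsets, which are also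
pairwise distinguishable, while the NFA itself has depth `n - 1`.

A state `q` is reached on `w` iff some decreasing chain `cs` of states above `q` embeds in `w`
but `cs ++ [q]` does not. Such a chain has at most `n` letters, so membership only depends on
the subwords of length at most `n`. For the lower bound, `u = [0‥n-1] [0‥n-2] ⋯ [0,1]` is accepted
and `u ++ [0]` is rejected, yet they have the same subwords of length at most `n - 1`: since the
blocks of `u` shrink, a subword of length at most `n - 2` already fits before the last block
`[0, 1]`, which then supplies a trailing `0`.
-/

open List

section Sublist

variable {β : Type*}

lemma List.Sublist.of_append_singleton_of_ne {l w : List β} {q a : β} (hqa : q ≠ a)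
    (h : l ++ [q] <+ w ++ [a]) : l ++ [q] <+ w := by
  obtain ⟨l₁, l₂, he, h₁, h₂⟩ := List.sublist_append_iff.mp h
  rcases List.sublist_singleton.mp h₂ with rfl | rfl
  · simpa [he] using h₁
  · simp only [List.append_singleton_inj] at he
    exact absurd he.2 hqa

lemma List.flatMap_range_succ_sublist {B : ℕ → List β} (hB : ∀ i, B (i + 1) <+ B i) (m : ℕ) :
    (List.range m).flatMap (fun i => B (i + 1)) <+ (List.range m).flatMap B := by
  induction m with
  | zero => simp
  | succ m ih =>
    simp only [List.range_succ, List.flatMap_append, List.flatMap_singleton]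
    exact ih.append (hB m)

lemma List.flatMap_range_succ_eq (B : ℕ → List β) (m : ℕ) :
    (List.range (m + 1)).flatMap B = B 0 ++ (List.range m).flatMap (fun i => B (i + 1)) := by
  rw [List.range_succ_eq_map, List.flatMap_cons, List.flatMap_map]

lemma List.Sublist.flatMap_range_of_length_le {B : ℕ → List β} (hB : ∀ i, B (i + 1) <+ B i)
    {m : ℕ} {t : List β} (ht : t <+ (List.range (m + 1)).flatMap B) (hlen : t.length ≤ m) :
    t <+ (List.range m).flatMap B := by
  induction m generalizing B t with
  | zero => simp_all
  | succ m ih =>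
    rw [List.flatMap_range_succ_eq] at ht
    obtain ⟨t₁, t₂, rfl, h₁, h₂⟩ := List.sublist_append_iff.mp ht
    rcases eq_or_ne t₁ [] with rfl | hne
    · exact h₂.trans (List.flatMap_range_succ_sublist hB _)
    · rw [List.flatMap_range_succ_eq]
      refine h₁.append (ih (fun i => hB (i + 1)) h₂ ?_)
      have := List.length_pos_iff.mpr hne
      simp only [List.length_append] at hlen
      omega

lemma kEquiv_append_singleton {k : ℕ} {u : List β} {a : β}
    (h : ∀ t, t.length < k → t <+ u → t ++ [a] <+ u) : kEquiv k u (u ++ [a]) := by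
  ext s
  refine ⟨fun ⟨hs, hsu⟩ => ⟨hs, hsu.trans (List.sublist_append_left u [a])⟩,
    fun ⟨hs, hsu⟩ => ⟨hs, ?_⟩⟩
  obtain ⟨s₁, s₂, rfl, h₁, h₂⟩ := List.sublist_append_iff.mp hsu
  rcases List.sublist_singleton.mp h₂ with rfl | rfl
  · simpa using h₁
  · exact h s₁ (by simp only [List.length_append, List.length_singleton] at hs; omega) h₁

lemma kEquiv.sublist_iff {k : ℕ} {u v s : List β} (h : kEquiv k u v) (hs : s.length ≤ k) :
    s <+ u ↔ s <+ v := by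
  have := Set.ext_iff.mp h s
  simp only [subk] at this
  exact ⟨fun hu => (this.mp ⟨hs, hu⟩).2, fun hv => (this.mpr ⟨hs, hv⟩).2⟩

end Sublist

section CounterRun

variable {α : Type*} [LinearOrder α]

/-- In the NFA whose subset automaton is `counterStep`, a run from `S` to `q` waits in each state
`c` of `cs` until the first letter `c` and then drops to the next state; so it exists iff `cs`
embeds in `w` and no `q` follows the leftmost embedding. -/
def CounterRun (S : Finset α) (w : List α) (q : α) : Prop :=
  ∃ cs : List α, (cs ++ [q]).Pairwise (· > ·) ∧ cs.headD q ∈ S ∧ cs <+ w ∧ ¬ cs ++ [q] <+ w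

lemma counterRun_nil {S : Finset α} {q : α} : CounterRun S [] q ↔ q ∈ S := by
  constructor
  · rintro ⟨cs, -, hhead, hcs, -⟩
    obtain rfl := List.sublist_nil.mp hcs
    exact hhead
  · intro hq
    exact ⟨[], by simp, hq, List.nil_sublist _, by simp⟩

lemma counterRun_append_singleton {S : Finset α} {w : List α} {a q : α} :
    CounterRun S (w ++ [a]) q ↔ q ≠ a ∧ CounterRun S w q ∨ q < a ∧ CounterRun S w a := by
  constructor
  · rintro ⟨cs, hpw, hhead, hsub, hnot⟩
    by_cases hcs : cs <+ w
    · have hqa : q ≠ a := by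
        rintro rfl
        exact hnot (hcs.append (List.Sublist.refl [q]))
      exact Or.inl ⟨hqa, cs, hpw, hhead, hcs,
        fun h => hnot (h.trans (List.sublist_append_left w [a]))⟩
    · obtain ⟨c₁, c₂, rfl, h₁, h₂⟩ := List.sublist_append_iff.mp hsub
      rcases List.sublist_singleton.mp h₂ with rfl | rfl
      · exact absurd (by simpa using h₁) hcs
      · refine Or.inr ⟨?_, c₁, hpw.sublist (List.sublist_append_left _ _), by simpa using hhead,
          h₁, hcs⟩
        simpa using List.rel_of_pairwise_cons (l := [q]) (hpw.sublist (by simp)) (by simp)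
  · rintro (⟨hqa, cs, hpw, hhead, hsub, hnot⟩ | ⟨hqa, cs, hpw, hhead, hsub, hnot⟩)
    · exact ⟨cs, hpw, hhead, hsub.trans (List.sublist_append_left w [a]),
        fun h => hnot (h.of_append_singleton_of_ne hqa)⟩
    · refine ⟨cs ++ [a], ?_, by simpa using hhead, hsub.append (List.Sublist.refl [a]), ?_⟩
      · refine List.pairwise_append.mpr ⟨hpw, by simp, fun x hx y hy => ?_⟩
        rw [List.mem_singleton.mp hy]
        rcases List.mem_append.mp hx with hx | hx
        · exact hqa.trans (List.pairwise_append.mp hpw |>.2.2 x hx a (List.mem_singleton_self a))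
        · simpa [List.mem_singleton.mp hx] using hqa
      · intro h
        exact hnot ((List.sublist_append_left _ _).trans (h.of_append_singleton_of_ne hqa.ne))

theorem counterRun_congr [Fintype α] {S : Finset α} {u v : List α} {q : α}
    (h : kEquiv (Fintype.card α) u v) : CounterRun S u q ↔ CounterRun S v q := by
  have key : ∀ {u v : List α}, kEquiv (Fintype.card α) u v →
      CounterRun S u q → CounterRun S v q := by
    rintro u v h ⟨cs, hpw, hhead, hsub, hnot⟩
    have hlen : (cs ++ [q]).length ≤ Fintype.card α :=
      List.Nodup.length_le_card (hpw.imp fun hxy => hxy.ne')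
    have hlen' : cs.length ≤ Fintype.card α := by
      simp only [List.length_append, List.length_singleton] at hlen
      omega
    exact ⟨cs, hpw, hhead, (h.sublist_iff hlen').mp hsub,
      fun hv => hnot ((h.sublist_iff hlen).mpr hv)⟩
  exact ⟨key h, key (Eq.symm h)⟩

end CounterRun

section CounterStep

variable {α : Type*} [LinearOrder α] [LocallyFiniteOrderBot α]

def counterStep (S : Finset α) (a : α) : Finset α :=
  if a ∈ S then S.erase a ∪ Finset.Iio a else S

lemma mem_counterStep {S : Finset α} {a q : α} :
    q ∈ counterStep S a ↔ q ≠ a ∧ q ∈ S ∨ q < a ∧ a ∈ S := by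
  unfold counterStep
  split_ifs with ha
  · simp [ha]
  · constructor
    · intro hq
      exact Or.inl ⟨by rintro rfl; exact ha hq, hq⟩
    · rintro (⟨-, hq⟩ | ⟨-, h⟩)
      · exact hq
      · exact absurd h ha

lemma notMem_counterStep_self (S : Finset α) (a : α) : a ∉ counterStep S a := by
  simp [mem_counterStep]

lemma mem_counterStep_of_lt {S : Finset α} {a q : α} (h : a < q) :
    q ∈ counterStep S a ↔ q ∈ S := by
  simp [mem_counterStep, h.ne', h.not_gt]

theorem mem_foldl_counterStep_iff {S : Finset α} {w : List α} {q : α} :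
    q ∈ w.foldl counterStep S ↔ CounterRun S w q := by
  induction w using List.reverseRecOn generalizing q with
  | nil => exact counterRun_nil.symm
  | append_singleton w a ih =>
    rw [List.foldl_append, List.foldl_cons, List.foldl_nil, mem_counterStep, ih, ih,
      counterRun_append_singleton]

end CounterStep

section MinimalDFA

variable {α σ τ : Type*}

lemma IsMinimalDFA.acceptsFrom_injective {D : DFA α σ} (hD : IsMinimalDFA D) :
    Function.Injective D.acceptsFrom :=
  fun p q h => hD.2 p q fun w => Set.ext_iff.mp h w

lemma DFA.acceptsFrom_step (D : DFA α σ) (q : σ) (a : α) :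
    D.acceptsFrom (D.step q a) = (D.acceptsFrom q).leftQuotient [a] :=
  rfl

lemma exists_acceptsFrom_eq_of_accepts_eq {D : DFA α σ} {E : DFA α τ}
    (hD : ∀ q, ∃ w, D.eval w = q) (h : D.accepts = E.accepts) (q : σ) :
    ∃ p, E.acceptsFrom p = D.acceptsFrom q := by
  obtain ⟨w, rfl⟩ := hD q
  exact ⟨E.eval w, by rw [← Language.leftQuotient_accepts_apply, ← h,
    Language.leftQuotient_accepts_apply]⟩

lemma DFAHasSimplePath.of_isMinimalDFA {D : DFA α σ} {E : DFA α τ} (hD : IsMinimalDFA D)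
    (hE : IsMinimalDFA E) (h : D.accepts = E.accepts) {m : ℕ} (hm : DFAHasSimplePath D m) :
    DFAHasSimplePath E m := by
  obtain ⟨qs, as, hqs, hstep⟩ := hm
  choose φ hφ using exists_acceptsFrom_eq_of_accepts_eq hD.1 h
  have hφinj : Function.Injective φ := fun p q hpq =>
    hD.acceptsFrom_injective (by rw [← hφ, ← hφ, hpq])
  refine ⟨φ ∘ qs, as, hφinj.comp hqs, fun i => hE.acceptsFrom_injective ?_⟩
  simp only [Function.comp_apply, DFA.acceptsFrom_step, hφ, ← hstep i]

theorem dfaDepth_eq_of_isMinimalDFA {D : DFA α σ} {E : DFA α τ} (hD : IsMinimalDFA D)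
    (hE : IsMinimalDFA E) (h : D.accepts = E.accepts) : dfaDepth D = dfaDepth E := by
  unfold dfaDepth
  congr 1
  ext m
  exact ⟨.of_isMinimalDFA hD hE h, .of_isMinimalDFA hE hD h.symm⟩

lemma DFAHasSimplePath.add_one_le_card [Fintype σ] {D : DFA α σ} {m : ℕ}
    (h : DFAHasSimplePath D m) : m + 1 ≤ Fintype.card σ := by
  obtain ⟨qs, -, hqs, -⟩ := h
  simpa using Fintype.card_le_of_injective qs hqs

lemma NFAHasSimplePath.add_one_le_card [Fintype σ] {A : NFA α σ} {m : ℕ}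
    (h : NFAHasSimplePath A m) : m + 1 ≤ Fintype.card σ := by
  obtain ⟨qs, -, hqs, -⟩ := h
  simpa using Fintype.card_le_of_injective qs hqs

end MinimalDFA

section Below

variable {n : ℕ}

def below (n k : ℕ) : Finset (Fin n) := {i | (i : ℕ) < k}

@[simp]
lemma mem_below {k : ℕ} {i : Fin n} : i ∈ below n k ↔ (i : ℕ) < k := by
  simp [below]

end Below

section Counter

variable {n : ℕ} [NeZero n]

def counterDFA (n : ℕ) [NeZero n] : DFA (Fin n) (Finset (Fin n)) :=
  ⟨counterStep, Finset.univ, {S | 0 ∈ S}⟩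

lemma mem_counterDFA_accepts {w : List (Fin n)} :
    w ∈ (counterDFA n).accepts ↔ 0 ∈ w.foldl counterStep Finset.univ :=
  Iff.rfl

theorem isPT_counterDFA_accepts : IsPT n (counterDFA n).accepts := by
  intro u v h
  simp only [mem_counterDFA_accepts, mem_foldl_counterStep_iff]
  exact counterRun_congr (by rwa [Fintype.card_fin])

def block (n k : ℕ) [NeZero n] : List (Fin n) := (List.range k).map (Fin.ofNat n)

lemma foldl_counterStep_block {k : ℕ} (hk : k ≤ n) :
    (block n k).foldl counterStep (below n k) = below n (k - 1) := by
  have key : ∀ c < k,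
      (block n (c + 1)).foldl counterStep (below n k) = (below n k).erase (Fin.ofNat n c) := by
    intro c
    induction c with
    | zero =>
      intro hk0
      ext i
      simp only [block, zero_add, List.range_one, List.map_cons, List.map_nil, List.foldl_cons,
        List.foldl_nil, mem_counterStep, Finset.mem_erase, ne_eq, Fin.ext_iff, Fin.lt_def,
        mem_below, Fin.val_ofNat, Nat.zero_mod]
      omega
    | succ c ih =>
      intro hc
      rw [block, List.range_succ, List.map_append, List.foldl_append, ← block, ih (by omega)]
      ext i
      simp only [List.map_cons, List.map_nil, List.foldl_cons, List.foldl_nil, mem_counterStep,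
        Finset.mem_erase, ne_eq, Fin.ext_iff, Fin.lt_def, mem_below, Fin.val_ofNat,
        Nat.mod_eq_of_lt (show c < n by omega), Nat.mod_eq_of_lt (show c + 1 < n by omega)]
      omega
  rcases k with _ | k
  · simp [block]
  · rw [key k (by omega)]
    ext i
    simp only [Finset.mem_erase, ne_eq, Fin.ext_iff, mem_below, Fin.val_ofNat,
      Nat.mod_eq_of_lt (show k < n by omega)]
    omega

def stair (n m : ℕ) [NeZero n] : List (Fin n) := (List.range m).flatMap fun i => block n (n - i)

lemma foldl_counterStep_stair {m : ℕ} (hm : m ≤ n) :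
    (stair n m).foldl counterStep Finset.univ = below n (n - m) := by
  induction m with
  | zero =>
    ext i
    simp [stair]
  | succ m ih =>
    rw [stair, List.range_succ, List.flatMap_append, List.flatMap_singleton, List.foldl_append,
      ← stair, ih (by omega), foldl_counterStep_block (by omega)]
    rfl

lemma stair_mem_counterDFA_accepts : stair n (n - 1) ∈ (counterDFA n).accepts := by
  have := NeZero.pos n
  rw [mem_counterDFA_accepts, foldl_counterStep_stair (by omega), mem_below, Fin.val_zero]
  omega

lemma append_zero_notMem_counterDFA_accepts (w : List (Fin n)) :
    w ++ [0] ∉ (counterDFA n).accepts := by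
  simp [mem_counterDFA_accepts, notMem_counterStep_self]

lemma kEquiv_stair : kEquiv (n - 1) (stair n (n - 1)) (stair n (n - 1) ++ [0]) := by
  refine kEquiv_append_singleton fun t ht hsub => ?_
  obtain ⟨m, hm⟩ : ∃ m, n - 1 = m + 1 := ⟨n - 2, by omega⟩
  rw [hm] at hsub ⊢
  have hblock : ∀ i, block n (n - (i + 1)) <+ block n (n - i) := fun i =>
    (List.range_sublist.mpr (by omega)).map _
  have ht' := hsub.flatMap_range_of_length_le hblock (by omega)
  rw [stair, List.range_succ, List.flatMap_append, List.flatMap_singleton]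
  refine ht'.append (List.singleton_sublist.mpr ?_)
  simp only [block, List.mem_map, List.mem_range]
  exact ⟨0, by omega, by simp⟩

theorem not_isPT_counterDFA_accepts : ¬ IsPT (n - 1) (counterDFA n).accepts := fun h =>
  append_zero_notMem_counterDFA_accepts _ ((h _ _ kEquiv_stair).mp stair_mem_counterDFA_accepts)

def counterNFA (n : ℕ) [NeZero n] : NFA (Fin n) (Fin n) where
  step q a := if q = a then Set.Iio a else {q}
  start := Set.univ
  accept := {0}

lemma counterNFA_stepSet (S : Finset (Fin n)) (a : Fin n) :
    (counterNFA n).stepSet S a = ↑(counterStep S a) := by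
  ext p
  simp only [NFA.mem_stepSet, counterNFA, Finset.mem_coe, mem_counterStep]
  constructor
  · rintro ⟨q, hq, hp⟩
    split_ifs at hp with hqa
    · subst hqa
      exact Or.inr ⟨hp, hq⟩
    · rw [Set.mem_singleton_iff.mp hp]
      exact Or.inl ⟨hqa, hq⟩
  · rintro (⟨hpa, hp⟩ | ⟨hpa, ha⟩)
    · exact ⟨p, hp, by simp [hpa]⟩
    · exact ⟨a, ha, by simpa using hpa⟩

theorem counterNFA_accepts : (counterNFA n).accepts = (counterDFA n).accepts := by
  ext w
  have heval : (counterNFA n).evalFrom ↑(Finset.univ : Finset (Fin n)) w =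
      ↑(w.foldl counterStep Finset.univ) :=
    List.foldl_hom _ fun S a => counterNFA_stepSet S a
  rw [NFA.mem_accepts, mem_counterDFA_accepts,
    show (counterNFA n).start = ↑(Finset.univ : Finset (Fin n)) by simp [counterNFA], heval]
  simp [counterNFA]

theorem nfaDepth_counterNFA : nfaDepth (counterNFA n) = n - 1 := by
  have := NeZero.pos n
  refine IsGreatest.csSup_eq ⟨?_, fun m hm => by
    have := hm.add_one_le_card
    simp only [Fintype.card_fin] at this
    omega⟩
  refine ⟨fun i => ⟨n - 1 - i, by omega⟩, fun i => ⟨n - 1 - i, by omega⟩, ?_, fun i => ?_⟩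
  · intro i j hij
    simp only [Fin.mk.injEq] at hij
    omega
  · simp only [counterNFA, Fin.val_castSucc, ↓reduceIte, Fin.val_succ, Set.mem_Iio, Fin.lt_def]
    omega

end Counter

section BinaryCounter

variable {n : ℕ}

def binaryValue (S : Finset (Fin n)) : ℕ := ∑ i ∈ S, 2 ^ (i : ℕ)

lemma binaryValue_Iio (a : Fin n) : binaryValue (Finset.Iio a) = 2 ^ (a : ℕ) - 1 := by
  have h := Finset.sum_map (Finset.Iio a) Fin.valEmbedding (fun i => 2 ^ i)
  rw [Fin.map_valEmbedding_Iio, Nat.Iio_eq_range, Nat.geomSum_eq le_rfl] at h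
  simpa [binaryValue] using h.symm

lemma binaryValue_univ : binaryValue (Finset.univ : Finset (Fin n)) = 2 ^ n - 1 := by
  rw [binaryValue, Fin.sum_univ_eq_sum_range (fun i => 2 ^ i), Nat.geomSum_eq le_rfl]
  simp

lemma binaryValue_counterStep_min' {S : Finset (Fin n)} (hS : S.Nonempty) :
    binaryValue (counterStep S (S.min' hS)) = binaryValue S - 1 := by
  have hdisj : Disjoint (S.erase (S.min' hS)) (Finset.Iio (S.min' hS)) :=
    Finset.disjoint_left.mpr fun x hx hlt =>
      (Finset.mem_Iio.mp hlt).not_ge (S.min'_le x (Finset.mem_of_mem_erase hx))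
  have hsplit := Finset.add_sum_erase S (fun i : Fin n => 2 ^ (i : ℕ)) (S.min'_mem hS)
  have hpos : 1 ≤ 2 ^ ((S.min' hS : Fin n) : ℕ) := Nat.one_le_two_pow
  have hIio := binaryValue_Iio (S.min' hS)
  simp only [binaryValue] at hIio ⊢
  rw [counterStep, if_pos (S.min'_mem hS), Finset.sum_union hdisj, hIio, ← hsplit]
  omega

end BinaryCounter

section Countdown

variable {n : ℕ} [NeZero n]

def lowestBit (S : Finset (Fin n)) : Fin n := if h : S.Nonempty then S.min' h else 0

def countdown (n : ℕ) [NeZero n] : ℕ → Finset (Fin n)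
  | 0 => Finset.univ
  | k + 1 => counterStep (countdown n k) (lowestBit (countdown n k))

lemma binaryValue_countdown {k : ℕ} (hk : k ≤ 2 ^ n - 1) :
    binaryValue (countdown n k) = 2 ^ n - 1 - k := by
  induction k with
  | zero => exact binaryValue_univ
  | succ k ih =>
    have hval := ih (by omega)
    have hne : (countdown n k).Nonempty :=
      Finset.nonempty_of_sum_ne_zero (by rw [← binaryValue, hval]; omega)
    rw [countdown, lowestBit, dif_pos hne, binaryValue_counterStep_min', hval]
    omega

lemma countdown_injective :
    Function.Injective fun i : Fin (2 ^ n - 1 + 1) => countdown n i := by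
  intro i j hij
  have hi := binaryValue_countdown (n := n) (Nat.le_of_lt_succ i.isLt)
  have hj := binaryValue_countdown (n := n) (Nat.le_of_lt_succ j.isLt)
  simp only at hij
  rw [hij, hj] at hi
  omega

lemma exists_eval_eq_countdown (k : ℕ) : ∃ w, (counterDFA n).eval w = countdown n k := by
  induction k with
  | zero => exact ⟨[], rfl⟩
  | succ k ih =>
    obtain ⟨w, hw⟩ := ih
    exact ⟨w ++ [lowestBit (countdown n k)], by rw [DFA.eval_append_singleton, hw]; rfl⟩

theorem dfaDepth_counterDFA : dfaDepth (counterDFA n) = 2 ^ n - 1 := by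
  refine IsGreatest.csSup_eq ⟨?_, fun m hm => ?_⟩
  · exact ⟨fun i => countdown n i, fun i => lowestBit (countdown n i), countdown_injective,
      fun i => rfl⟩
  · have := hm.add_one_le_card
    simp only [Fintype.card_finset, Fintype.card_fin] at this
    omega

/-- Every set of digits is on the countdown from `univ`, as it visits `2 ^ n` distinct sets. -/
lemma counterDFA_reachable (S : Finset (Fin n)) : ∃ w, (counterDFA n).eval w = S := by
  have hbij := (Fintype.bijective_iff_injective_and_card _).mpr
    ⟨countdown_injective (n := n), by simp [Nat.sub_add_cancel Nat.one_le_two_pow]⟩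
  obtain ⟨k, rfl⟩ := hbij.2 S
  exact exists_eval_eq_countdown k

/-- Reading `i - 1` and then `i` moves the topmost difference of `S` and `T` from `i` to `i - 1`. -/
lemma exists_separating_word {S T : Finset (Fin n)} (i : Fin n) (hS : i ∈ S) (hT : i ∉ T)
    (hagree : ∀ j, i < j → (j ∈ S ↔ j ∈ T)) :
    ∃ w : List (Fin n), 0 ∈ w.foldl counterStep S ∧ 0 ∉ w.foldl counterStep T := by
  induction i using WellFoundedLT.induction generalizing S T with
  | _ i ih =>
    rcases eq_or_ne (i : ℕ) 0 with h0 | h0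
    · obtain rfl : i = 0 := Fin.ext h0
      exact ⟨[], hS, hT⟩
    set c : Fin n := ⟨i - 1, by omega⟩
    have hci : c < i := Fin.lt_def.mpr (by simp only [c]; omega)
    have hagree' : ∀ j, c < j →
        (j ∈ counterStep (counterStep S c) i ↔ j ∈ counterStep (counterStep T c) i) := by
      intro j hj
      rcases (show i ≤ j from Fin.le_def.mpr (by simp only [c, Fin.lt_def] at hj; omega)).eq_or_lt
        with rfl | hij
      · simp [notMem_counterStep_self]
      · rw [mem_counterStep_of_lt hij, mem_counterStep_of_lt hij,
          mem_counterStep_of_lt (hci.trans hij), mem_counterStep_of_lt (hci.trans hij)]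
        exact hagree j hij
    obtain ⟨w, hw⟩ := ih c hci
      (mem_counterStep.mpr (Or.inr ⟨hci, (mem_counterStep_of_lt hci).mpr hS⟩))
      (by simp [mem_counterStep, mem_counterStep_of_lt hci, hT]) hagree'
    exact ⟨c :: i :: w, hw⟩

theorem isMinimalDFA_counterDFA : IsMinimalDFA (counterDFA n) := by
  refine ⟨counterDFA_reachable, fun S T hST => ?_⟩
  by_contra hne
  have hdiff := Finset.symmDiff_nonempty.mpr hne
  have hagree : ∀ j, (symmDiff S T).max' hdiff < j → (j ∈ S ↔ j ∈ T) := fun j hj => by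
    by_contra h
    exact (Finset.le_max' _ j (by rw [Finset.mem_symmDiff]; tauto)).not_gt hj
  rcases Finset.mem_symmDiff.mp ((symmDiff S T).max'_mem hdiff) with ⟨hS, hT⟩ | ⟨hT, hS⟩
  · obtain ⟨w, hSw, hTw⟩ := exists_separating_word _ hS hT hagree
    exact hTw ((hST w).mp hSw)
  · obtain ⟨w, hTw, hSw⟩ := exists_separating_word _ hT hS fun j hj => (hagree j hj).symm
    exact hSw ((hST w).mpr hTw)

end Countdown

/-- For every `n ≥ 2` there is an `n`-PT language that is not `(n-1)`-PT, recognized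
by an NFA of depth `n - 1`, whose minimal DFA has depth `2^n - 1`. -/
theorem stmt9 (n : ℕ) (hn : 2 ≤ n) :
    ∃ (α : Type) (_ : Fintype α) (L : Language α),
      IsPT n L ∧
      ¬ IsPT (n - 1) L ∧
      (∃ (σ : Type) (_ : Fintype σ) (A : NFA α σ), A.accepts = L ∧ nfaDepth A = n - 1) ∧
      (∃ (σ : Type) (_ : Fintype σ) (D : DFA α σ),
        IsMinimalDFA D ∧ D.accepts = L ∧ dfaDepth D = 2 ^ n - 1) ∧
      (∀ (σ : Type) (D : DFA α σ),
        IsMinimalDFA D → D.accepts = L → dfaDepth D = 2 ^ n - 1) := by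
  have : NeZero n := ⟨by omega⟩
  refine ⟨Fin n, inferInstance, (counterDFA n).accepts, isPT_counterDFA_accepts,
    not_isPT_counterDFA_accepts, ⟨Fin n, inferInstance, counterNFA n, counterNFA_accepts,
    nfaDepth_counterNFA⟩, ⟨Finset (Fin n), inferInstance, counterDFA n, isMinimalDFA_counterDFA,
    rfl, dfaDepth_counterDFA⟩, fun σ D hD hacc => ?_⟩
  rw [dfaDepth_eq_of_isMinimalDFA hD isMinimalDFA_counterDFA hacc, dfaDepth_counterDFA]
end

section
/- For all integers k ≥ 1 and n ≥ 1, there exists a word w over an alphabet Σ of cardinality n such that |w| = C(k+n, k) − 1, sub_k(w) = Σ^{≤k} (every word of length at most k is a subword of w), and any two distinct prefixes w1, w2 of w satisfy sub_k(w1) ≠ sub_k(w2). -/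
/-!
Over the letters `a :: L` put `W₀ = []` and `W_{k+1}(a :: L) = W_{k+1}(L) · a · W_k(a :: L)`.
A word `u` of length at most `k + 1` either avoids `a`, and then embeds into `W_{k+1}(L)`, or
splits at its first `a` into a word over `L` and a word of length at most `k`; Pascal's rule
gives the length. Each letter of `W_k(L)` creates a new subword of length at most `k`: the
middle `a` is the first occurrence of `a`, and inside the last block the new subword of
`W_k(a :: L)` prefixed by `a` is new because `a` does not occur in the first block.
-/

open scoped List

theorem subk_mono {α : Type*} {k : ℕ} {u v : List α} (h : u <+ v) : subk k u ⊆ subk k v :=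
  fun _ hx => ⟨hx.1, hx.2.trans h⟩

theorem eq_of_isPrefix_of_subk_eq {α : Type*} {k : ℕ} {w : List α}
    (hw : ∀ p b r, w = p ++ b :: r → ∃ u ∈ subk k (p ++ [b]), u ∉ subk k p) :
    ∀ {w₁ w₂ : List α}, w₁ <+: w → w₂ <+: w → subk k w₁ = subk k w₂ → w₁ = w₂ := by
  suffices key : ∀ {w₁ w₂ : List α}, w₁ <+: w → w₂ <+: w → subk k w₁ = subk k w₂ →
      w₁.length ≤ w₂.length → w₁ = w₂ by
    intro w₁ w₂ h₁ h₂ h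
    rcases le_total w₁.length w₂.length with hle | hle
    · exact key h₁ h₂ h hle
    · exact (key h₂ h₁ h.symm hle).symm
  intro w₁ w₂ h₁ h₂ h hle
  obtain ⟨t, rfl⟩ := List.prefix_of_prefix_length_le h₁ h₂ hle
  obtain ⟨s, hs⟩ := h₂
  cases t with
  | nil => simp
  | cons b r =>
    obtain ⟨u, hu, hu₁⟩ := hw w₁ b (r ++ s) (by simp [← hs])
    have hu₂ : u ∈ subk k (w₁ ++ b :: r) := subk_mono (by simp) hu
    exact absurd (h ▸ hu₂) hu₁

theorem List.sublist_of_cons_sublist_append_cons {α : Type*} {a : α} {u A q : List α}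
    (ha : a ∉ A) (h : a :: u <+ A ++ a :: q) : u <+ q := by
  induction A with
  | nil => simpa using h
  | cons b A ih =>
    cases h with
    | cons _ h => exact ih (fun hA => ha (List.mem_cons_of_mem b hA)) h
    | cons_cons _ _ => exact absurd List.mem_cons_self ha

def universalWord {α : Type*} : ℕ → List α → List α
  | 0, _ => []
  | _ + 1, [] => []
  | k + 1, a :: L => universalWord (k + 1) L ++ a :: universalWord k (a :: L)

section universalWord

variable {α : Type*}

theorem mem_of_mem_universalWord {x : α} : ∀ {k : ℕ} {L : List α}, x ∈ universalWord k L → x ∈ L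
  | 0, _, h => by simp [universalWord] at h
  | _ + 1, [], h => by simp [universalWord] at h
  | k + 1, a :: L, h => by
    rw [universalWord, List.mem_append, List.mem_cons] at h
    rcases h with h | rfl | h
    · exact List.mem_cons_of_mem a (mem_of_mem_universalWord h)
    · exact List.mem_cons_self
    · exact mem_of_mem_universalWord h

theorem length_universalWord_add_one :
    ∀ (k : ℕ) (L : List α), (universalWord k L).length + 1 = (k + L.length).choose k
  | 0, _ => by simp [universalWord]
  | _ + 1, [] => by simp [universalWord]
  | k + 1, a :: L => by
    have h₁ := length_universalWord_add_one (k + 1) L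
    have h₂ := length_universalWord_add_one k (a :: L)
    have pascal : (k + 1 + (L.length + 1)).choose (k + 1)
        = (k + 1 + L.length).choose k + (k + 1 + L.length).choose (k + 1) :=
      Nat.choose_succ_succ' (k + 1 + L.length) k
    simp only [universalWord, List.length_append, List.length_cons] at h₁ h₂ ⊢
    rw [pascal, ← h₁, show k + 1 + L.length = k + (L.length + 1) by omega, ← h₂]
    omega

theorem sublist_universalWord :
    ∀ {k : ℕ} {L u : List α}, (∀ x ∈ u, x ∈ L) → u.length ≤ k → u <+ universalWord k L
  | 0, _, _, _, hlen => by simp_all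
  | _ + 1, [], _, hu, _ => by
    simp only [List.not_mem_nil, imp_false] at hu
    simp [List.eq_nil_iff_forall_not_mem.mpr hu, universalWord]
  | k + 1, a :: L, u, hu, hlen => by
    rw [universalWord]
    by_cases ha : a ∈ u
    · obtain ⟨s, t, rfl, has⟩ := List.eq_append_cons_of_mem ha
      have hs : ∀ x ∈ s, x ∈ L := fun x hx =>
        List.mem_of_ne_of_mem (by rintro rfl; exact has hx) (hu x (List.mem_append_left _ hx))
      have ht : ∀ x ∈ t, x ∈ a :: L := fun x hx => hu x (by simp [hx])
      simp only [List.length_append, List.length_cons] at hlen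
      exact (sublist_universalWord hs (by omega)).append
        ((sublist_universalWord ht (by omega)).cons_cons a)
    · have hu' : ∀ x ∈ u, x ∈ L := fun x hx =>
        List.mem_of_ne_of_mem (by rintro rfl; exact ha hx) (hu x hx)
      exact (sublist_universalWord hu' hlen).trans (List.sublist_append_left _ _)

theorem exists_mem_subk_not_mem_of_universalWord_eq :
    ∀ {k : ℕ} {L : List α}, L.Nodup → ∀ {p r : List α} {b : α}, universalWord k L = p ++ b :: r →
      ∃ u ∈ subk k (p ++ [b]), u ∉ subk k p
  | 0, _, _, _, _, _, h => by simp [universalWord] at h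
  | _ + 1, [], _, _, _, _, h => by simp [universalWord] at h
  | k + 1, a :: L, hL, p, r, b, h => by
    have haL : a ∉ universalWord (k + 1) L :=
      fun ha => (List.nodup_cons.mp hL).1 (mem_of_mem_universalWord ha)
    have new_letter : [a] ∈ subk (k + 1) (universalWord (k + 1) L ++ [a]) ∧
        [a] ∉ subk (k + 1) (universalWord (k + 1) L) :=
      ⟨⟨by simp, by simp⟩, fun h => haL (h.2.subset List.mem_cons_self)⟩
    rw [universalWord, List.append_eq_append_iff] at h
    rcases h with ⟨c, rfl, hc⟩ | ⟨c, hA, hc⟩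
    · rcases List.cons_eq_append_iff.mp hc with ⟨rfl, hbr⟩ | ⟨q, rfl, hB⟩
      · obtain ⟨rfl, -⟩ := List.cons_eq_cons.mp hbr
        exact ⟨_, by simpa using new_letter⟩
      · obtain ⟨u, ⟨hul, hus⟩, hun⟩ := exists_mem_subk_not_mem_of_universalWord_eq hL hB
        refine ⟨a :: u, ⟨by simpa using hul, ?_⟩, fun hsub => hun ⟨by simpa using hsub.1, ?_⟩⟩
        · simpa using (hus.cons_cons a).trans (List.sublist_append_right _ _)
        · exact List.sublist_of_cons_sublist_append_cons haL hsub.2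
    · rcases List.cons_eq_append_iff.mp hc with ⟨rfl, hbr⟩ | ⟨c', rfl, -⟩
      · obtain ⟨rfl, -⟩ := List.cons_eq_cons.mp hbr
        exact ⟨_, by simpa [hA] using new_letter⟩
      · exact exists_mem_subk_not_mem_of_universalWord_eq (List.nodup_cons.mp hL).2 hA

end universalWord

theorem stmt17_general (k n : ℕ) (α : Type*) [Fintype α] (hcard : Fintype.card α = n) :
    ∃ w : List α, w.length = Nat.choose (k + n) k - 1 ∧
      subk k w = {u : List α | u.length ≤ k} ∧
      ∀ w1 w2 : List α, w1 <+: w → w2 <+: w → subk k w1 = subk k w2 → w1 = w2 := by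
  let L := (Finset.univ : Finset α).toList
  have hL : L.length = n := by simp [L, hcard]
  refine ⟨universalWord k L, ?_, ?_, ?_⟩
  · have := length_universalWord_add_one k L
    rw [hL] at this
    omega
  · ext u
    exact ⟨fun hu => hu.1, fun hu => ⟨hu, sublist_universalWord (by simp [L]) hu⟩⟩
  · exact fun _ _ => eq_of_isPrefix_of_subk_eq
      (fun _ _ _ => exists_mem_subk_not_mem_of_universalWord_eq (Finset.nodup_toList _))

/-- Lower bound of Problem 1: over any `n`-letter alphabet there is a word of length
`C(k+n, k) - 1` containing all subwords of length at most `k` and whose distinct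
prefixes are pairwise non-`k`-equivalent. -/
theorem stmt17 (k n : ℕ) (hk : 1 ≤ k) (hn : 1 ≤ n)
    (α : Type*) [Fintype α] (hcard : Fintype.card α = n) :
    ∃ w : List α, w.length = Nat.choose (k + n) k - 1 ∧
      subk k w = {u : List α | u.length ≤ k} ∧
      ∀ w1 w2 : List α, w1 <+: w → w2 <+: w → subk k w1 = subk k w2 → w1 = w2 :=
  stmt17_general k n α hcard
end
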